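/- Let Υ₀ ∈ B(h) be self-adjoint, D₀ ∈ B(h) with D₀^⊤ = ±D₀ and Υ₀ D₀ = D₀ Υ₀^⊤, and let (Δ, D) be a solution of the elliptic flow with data (Υ₀, D₀); set Υ_t := Υ₀ + Δ_t. Then for all s, t ≥ 0 one has Υ_t D_t = D_t Υ_t^⊤ and Υ_t² + 4 D_t D_t* = Υ_s² + 4 D_s D_s*. -/

import Mathlib

/-!
Every quantity in question obeys, along the flow, a linear equation `F' = A F + F B` with
continuous coefficients (or simply `F' = 0`), so it vanishes for all `t ≥ 0` once it vanishes at
`t = 0` (Grönwall). This gives, in turn: `Υ_t` is self-adjoint, since `∂ₜΥ_t = 16 D_t D_t*` is;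
`D_tᵀ = ±D_t`, since `D_tᵀ` solves the same equation as `D_t`; `K_t = Υ_t D_t - D_t Υ_tᵀ`
satisfies `K' = -2(Υ K + K Υᵀ)`, because `(D D*)ᵀ = D* D` makes the terms coming from `∂ₜΥ`
cancel; and finally the commutation `Υ_t D_t = D_t Υ_tᵀ` makes `∂ₜ(Υ_t² + 4 D_t D_t*)` vanish.
-/

open ContinuousLinearMap Set Filter
open scoped InnerProductSpace

noncomputable section

/-- A conjugation on a complex Hilbert space: an antilinear involution `C` with
`⟪Cf, Cg⟫ = ⟪g, f⟫`. -/
structure Conjugation (H : Type*) [NormedAddCommGroup H] [InnerProductSpace ℂ H] where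
  toFun : H → H
  map_add : ∀ x y, toFun (x + y) = toFun x + toFun y
  map_smul : ∀ (a : ℂ) (x : H), toFun (a • x) = (starRingEnd ℂ) a • toFun x
  invol : ∀ x, toFun (toFun x) = x
  inner_conj : ∀ f g : H, (inner ℂ (toFun f) (toFun g) : ℂ) = (inner ℂ g f : ℂ)

variable {H : Type*} [NormedAddCommGroup H] [InnerProductSpace ℂ H] [CompleteSpace H]

/-- `transp` implements the transpose `X ↦ C X* C` associated with the conjugation `C`. -/
def IsTranspose (C : Conjugation H) (transp : (H →L[ℂ] H) → (H →L[ℂ] H)) : Prop :=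
  ∀ (X : H →L[ℂ] H) (x : H), transp X x = C.toFun (adjoint X (C.toFun x))

/-- A (global, continuously differentiable in operator norm) solution `(Δ, D)` of the
elliptic flow `∂ₜΔ_t = 16 D_t D_t*`, `∂ₜD_t = -2(Υ_t D_t + D_t Υ_tᵀ)`, `Υ_t := Υ₀ + Δ_t`,
with initial data `Δ 0 = 0`, `D 0 = D₀`. -/
def IsEllipticFlow (transp : (H →L[ℂ] H) → (H →L[ℂ] H))
    (Υ₀ D₀ : H →L[ℂ] H) (Δ D : ℝ → H →L[ℂ] H) : Prop :=
  Δ 0 = 0 ∧ D 0 = D₀ ∧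
    ∀ t : ℝ, 0 ≤ t →
      HasDerivWithinAt Δ ((16 : ℂ) • (D t * adjoint (D t))) (Ici 0) t ∧
      HasDerivWithinAt D
        ((-2 : ℂ) • ((Υ₀ + Δ t) * D t + D t * transp (Υ₀ + Δ t))) (Ici 0) t

namespace Conjugation

variable {E : Type*} [NormedAddCommGroup E] [InnerProductSpace ℂ E]

lemma norm_apply (C : Conjugation E) (x : E) : ‖C.toFun x‖ = ‖x‖ := by
  have h := C.inner_conj x x
  rw [inner_self_eq_norm_sq_to_K, inner_self_eq_norm_sq_to_K] at h
  have hsq : ‖C.toFun x‖ ^ 2 = ‖x‖ ^ 2 := by exact_mod_cast h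
  exact (sq_eq_sq₀ (norm_nonneg _) (norm_nonneg _)).1 hsq

lemma inner_apply_left (C : Conjugation E) (x y : E) :
    inner ℂ (C.toFun x) y = inner ℂ (C.toFun y) x := by
  conv_lhs => rw [← C.invol y]
  exact C.inner_conj x (C.toFun y)

end Conjugation

namespace IsTranspose

variable {C : Conjugation H} {tr : (H →L[ℂ] H) → (H →L[ℂ] H)}

lemma map_adjoint (h : IsTranspose C tr) (X : H →L[ℂ] H) : tr (adjoint X) = adjoint (tr X) := by
  rw [eq_adjoint_iff]
  intro x y
  rw [h (adjoint X) x, h X y, adjoint_adjoint, C.inner_apply_left, ← adjoint_inner_left,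
    ← inner_conj_symm, C.inner_apply_left, inner_conj_symm]

lemma map_mul (h : IsTranspose C tr) (X Y : H →L[ℂ] H) : tr (X * Y) = tr Y * tr X := by
  ext x
  rw [mul_apply_eq_comp, h, h Y, h X, C.invol, ← star_eq_adjoint, star_mul, mul_apply_eq_comp,
    star_eq_adjoint, star_eq_adjoint]

lemma map_add (h : IsTranspose C tr) (X Y : H →L[ℂ] H) : tr (X + Y) = tr X + tr Y := by
  ext x
  rw [add_apply, h, h X, h Y, ← C.map_add, ← star_eq_adjoint, star_add, add_apply, star_eq_adjoint,
    star_eq_adjoint]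

lemma map_smul (h : IsTranspose C tr) (c : ℂ) (X : H →L[ℂ] H) : tr (c • X) = c • tr X := by
  ext x
  rw [smul_apply, h, h X, ← star_eq_adjoint, star_smul, smul_apply, C.map_smul, star_eq_adjoint]
  simp

lemma map_map (h : IsTranspose C tr) (X : H →L[ℂ] H) : tr (tr X) = X := by
  ext x
  rw [h (tr X), ← h.map_adjoint, h (adjoint X), adjoint_adjoint, C.invol, C.invol]

lemma norm_map_le (h : IsTranspose C tr) (X : H →L[ℂ] H) : ‖tr X‖ ≤ ‖X‖ := by
  refine opNorm_le_bound _ (norm_nonneg X) fun x => ?_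
  rw [h, C.norm_apply, ← C.norm_apply x, ← adjoint.norm_map X]
  exact le_opNorm _ _

lemma norm_map (h : IsTranspose C tr) (X : H →L[ℂ] H) : ‖tr X‖ = ‖X‖ :=
  (h.norm_map_le X).antisymm (by simpa only [h.map_map] using h.norm_map_le (tr X))

def toLinearIsometry (h : IsTranspose C tr) : (H →L[ℂ] H) →ₗᵢ[ℂ] (H →L[ℂ] H) where
  toFun := tr
  map_add' := h.map_add
  map_smul' := h.map_smul
  norm_map' := h.norm_map

lemma hasDerivWithinAt_comp (h : IsTranspose C tr) {f : ℝ → H →L[ℂ] H} {f' : H →L[ℂ] H}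
    {s : Set ℝ} {t : ℝ} (hf : HasDerivWithinAt f f' s t) :
    HasDerivWithinAt (fun u => tr (f u)) (tr f') s t :=
  (h.toLinearIsometry.toContinuousLinearMap.restrictScalars ℝ).hasFDerivAt.comp_hasDerivWithinAt
    t hf

lemma continuousOn_comp (h : IsTranspose C tr) {f : ℝ → H →L[ℂ] H} {s : Set ℝ}
    (hf : ContinuousOn f s) : ContinuousOn (fun u => tr (f u)) s :=
  h.toLinearIsometry.continuous.comp_continuousOn hf

lemma map_mul_adjoint_of_eq_smul (h : IsTranspose C tr) {D : H →L[ℂ] H} {ε : ℂ} (hε : ‖ε‖ = 1)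
    (hD : tr D = ε • D) : tr (D * adjoint D) = adjoint D * D := by
  have hεε : star ε * ε = 1 := by
    rw [Complex.star_def, Complex.conj_mul', hε]; norm_num
  rw [h.map_mul, h.map_adjoint, hD, ← star_eq_adjoint, star_smul, smul_mul_smul, hεε, one_smul,
    star_eq_adjoint]

end IsTranspose

section LinearODE

lemma eq_of_hasDerivWithinAt_Ici_zero {E : Type*} [NormedAddCommGroup E] [NormedSpace ℝ E]
    {f : ℝ → E} (hf : ∀ t, 0 ≤ t → HasDerivWithinAt f 0 (Ici 0) t) {t : ℝ} (ht : 0 ≤ t) :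
    f t = f 0 :=
  constant_of_has_deriv_right_zero
    (fun x hx => (hf x hx.1).continuousWithinAt.mono Icc_subset_Ici_self)
    (fun x hx => (hf x hx.1).mono (Ici_subset_Ici.2 hx.1)) t ⟨ht, le_rfl⟩

lemma eq_zero_of_hasDerivWithinAt_mul_add_mul {R : Type*} [NormedRing R] [NormedAlgebra ℝ R]
    {A B F : ℝ → R} (hA : ContinuousOn A (Ici 0)) (hB : ContinuousOn B (Ici 0)) (hF₀ : F 0 = 0)
    (hF : ∀ t, 0 ≤ t → HasDerivWithinAt F (A t * F t + F t * B t) (Ici 0) t)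
    {t : ℝ} (ht : 0 ≤ t) : F t = 0 := by
  obtain ⟨K, hK⟩ := (isCompact_Icc (a := 0) (b := t)).exists_bound_of_continuousOn
    ((hA.norm.add hB.norm).mono Icc_subset_Ici_self)
  refine eq_zero_of_abs_deriv_le_mul_abs_self_of_eq_zero_right (K := K)
    (fun x hx => (hF x hx.1).continuousWithinAt.mono Icc_subset_Ici_self)
    (fun x hx => (hF x hx.1).mono (Ici_subset_Ici.2 hx.1)) hF₀ (fun x hx => ?_) t ⟨ht, le_rfl⟩
  calc ‖A x * F x + F x * B x‖ ≤ ‖A x‖ * ‖F x‖ + ‖F x‖ * ‖B x‖ :=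
        (norm_add_le _ _).trans (add_le_add (norm_mul_le _ _) (norm_mul_le _ _))
    _ = (‖A x‖ + ‖B x‖) * ‖F x‖ := by ring
    _ ≤ K * ‖F x‖ := by
        gcongr
        exact (Real.le_norm_self _).trans (hK x (Ico_subset_Icc_self hx))

end LinearODE

namespace IsEllipticFlow

variable {C : Conjugation H} {tr : (H →L[ℂ] H) → (H →L[ℂ] H)} {Υ₀ D₀ : H →L[ℂ] H}
  {Δ D : ℝ → H →L[ℂ] H}

lemma hasDerivWithinAt_upsilon (hflow : IsEllipticFlow tr Υ₀ D₀ Δ D) {t : ℝ} (ht : 0 ≤ t) :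
    HasDerivWithinAt (fun u => Υ₀ + Δ u) ((16 : ℂ) • (D t * adjoint (D t))) (Ici 0) t :=
  (hflow.2.2 t ht).1.const_add Υ₀

lemma continuousOn_upsilon (hflow : IsEllipticFlow tr Υ₀ D₀ Δ D) :
    ContinuousOn (fun u => Υ₀ + Δ u) (Ici 0) :=
  fun _ ht => (hflow.hasDerivWithinAt_upsilon ht).continuousWithinAt

lemma hasDerivWithinAt_D (hflow : IsEllipticFlow tr Υ₀ D₀ Δ D) {t : ℝ} (ht : 0 ≤ t) :
    HasDerivWithinAt D ((-2 : ℂ) • ((Υ₀ + Δ t) * D t + D t * tr (Υ₀ + Δ t))) (Ici 0) t :=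
  (hflow.2.2 t ht).2

lemma isSelfAdjoint_upsilon (hflow : IsEllipticFlow tr Υ₀ D₀ Δ D) (hΥ₀ : IsSelfAdjoint Υ₀)
    {t : ℝ} (ht : 0 ≤ t) : IsSelfAdjoint (Υ₀ + Δ t) := by
  have hderiv : ∀ u, 0 ≤ u →
      HasDerivWithinAt (fun u => star (Υ₀ + Δ u) - (Υ₀ + Δ u)) 0 (Ici 0) u := by
    intro u hu
    have hsa : IsSelfAdjoint ((16 : ℂ) • (D u * adjoint (D u))) := by
      rw [← star_eq_adjoint]
      exact (IsSelfAdjoint.ofNat 16).smul (IsSelfAdjoint.mul_star_self (D u))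
    simpa only [hsa.star_eq, sub_self] using
      (hflow.hasDerivWithinAt_upsilon hu).star.fun_sub (hflow.hasDerivWithinAt_upsilon hu)
  have h := eq_of_hasDerivWithinAt_Ici_zero hderiv ht
  rw [hflow.1, add_zero, hΥ₀.star_eq, sub_self] at h
  exact sub_eq_zero.1 h

lemma eq_zero_of_hasDerivWithinAt (hflow : IsEllipticFlow tr Υ₀ D₀ Δ D) (htr : IsTranspose C tr)
    {F : ℝ → H →L[ℂ] H} (hF₀ : F 0 = 0)
    (hF : ∀ t, 0 ≤ t →
      HasDerivWithinAt F ((-2 : ℂ) • ((Υ₀ + Δ t) * F t + F t * tr (Υ₀ + Δ t))) (Ici 0) t)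
    {t : ℝ} (ht : 0 ≤ t) : F t = 0 :=
  eq_zero_of_hasDerivWithinAt_mul_add_mul (A := fun u => (-2 : ℂ) • (Υ₀ + Δ u))
    (B := fun u => (-2 : ℂ) • tr (Υ₀ + Δ u)) (hflow.continuousOn_upsilon.const_smul (-2 : ℂ))
    ((htr.continuousOn_comp hflow.continuousOn_upsilon).const_smul (-2 : ℂ)) hF₀
    (fun u hu => (hF u hu).congr_deriv (by rw [smul_add, smul_mul_assoc, mul_smul_comm])) ht

lemma transp_eq_smul (hflow : IsEllipticFlow tr Υ₀ D₀ Δ D) (htr : IsTranspose C tr) {ε : ℂ}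
    (hε : tr D₀ = ε • D₀) {t : ℝ} (ht : 0 ≤ t) : tr (D t) = ε • D t := by
  refine sub_eq_zero.1 (hflow.eq_zero_of_hasDerivWithinAt htr (F := fun u => tr (D u) - ε • D u)
    (by rw [hflow.2.1, hε, sub_self]) (fun u hu => ?_) ht)
  have hD := hflow.hasDerivWithinAt_D hu
  refine ((htr.hasDerivWithinAt_comp hD).fun_sub (hD.const_smul ε)).congr_deriv ?_
  rw [htr.map_smul, htr.map_add, htr.map_mul, htr.map_mul, htr.map_map]
  simp only [smul_sub, smul_add, mul_sub, sub_mul, add_mul, mul_smul_comm, smul_mul_assoc, smul_smul]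
  module

lemma upsilon_mul_eq_mul_transp (hflow : IsEllipticFlow tr Υ₀ D₀ Δ D) (htr : IsTranspose C tr)
    (hcomm : Υ₀ * D₀ = D₀ * tr Υ₀)
    (hDD : ∀ t, 0 ≤ t → tr (D t * adjoint (D t)) = adjoint (D t) * D t) {t : ℝ} (ht : 0 ≤ t) :
    (Υ₀ + Δ t) * D t = D t * tr (Υ₀ + Δ t) := by
  refine sub_eq_zero.1 (hflow.eq_zero_of_hasDerivWithinAt htr
    (F := fun u => (Υ₀ + Δ u) * D u - D u * tr (Υ₀ + Δ u))
    (by rw [hflow.2.1, hflow.1, add_zero, hcomm, sub_self]) (fun u hu => ?_) ht)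
  have hΥ := hflow.hasDerivWithinAt_upsilon hu
  have hD := hflow.hasDerivWithinAt_D hu
  have hΥtr := htr.hasDerivWithinAt_comp hΥ
  rw [htr.map_smul, hDD u hu] at hΥtr
  refine ((hΥ.fun_mul hD).fun_sub (hD.fun_mul hΥtr)).congr_deriv ?_
  generalize Υ₀ + Δ u = Υ
  simp only [smul_add, mul_sub, sub_mul, add_mul, mul_add, mul_smul_comm, smul_mul_assoc, mul_assoc]
  module

lemma upsilon_sq_add_eq (hflow : IsEllipticFlow tr Υ₀ D₀ Δ D) (htr : IsTranspose C tr)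
    (hsa : ∀ t, 0 ≤ t → IsSelfAdjoint (Υ₀ + Δ t))
    (hcomm : ∀ t, 0 ≤ t → (Υ₀ + Δ t) * D t = D t * tr (Υ₀ + Δ t)) {t : ℝ} (ht : 0 ≤ t) :
    (Υ₀ + Δ t) ^ 2 + (4 : ℂ) • (D t * adjoint (D t)) = Υ₀ ^ 2 + (4 : ℂ) • (D₀ * adjoint D₀) := by
  have hderiv : ∀ u, 0 ≤ u → HasDerivWithinAt
      (fun u => (Υ₀ + Δ u) * (Υ₀ + Δ u) + (4 : ℂ) • (D u * adjoint (D u))) 0 (Ici 0) u := by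
    intro u hu
    have htrsa : IsSelfAdjoint (tr (Υ₀ + Δ u)) := by
      rw [IsSelfAdjoint, star_eq_adjoint, ← htr.map_adjoint, ← star_eq_adjoint, (hsa u hu).star_eq]
    have hcomm' : adjoint (D u) * (Υ₀ + Δ u) = tr (Υ₀ + Δ u) * adjoint (D u) := by
      simpa only [star_mul, (hsa u hu).star_eq, htrsa.star_eq, star_eq_adjoint] using
        congrArg star (hcomm u hu)
    have hΥ := hflow.hasDerivWithinAt_upsilon hu
    have hD := hflow.hasDerivWithinAt_D hu
    have hDadj : HasDerivWithinAt (fun u => adjoint (D u))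
        ((-2 : ℂ) • (adjoint (D u) * (Υ₀ + Δ u) + tr (Υ₀ + Δ u) * adjoint (D u))) (Ici 0) u := by
      simpa only [star_smul, star_add, star_mul, (hsa u hu).star_eq, htrsa.star_eq, star_neg,
        star_ofNat, star_eq_adjoint] using hD.star
    refine ((hΥ.fun_mul hΥ).fun_add ((hD.fun_mul hDadj).const_smul (4 : ℂ))).congr_deriv ?_
    have hcomm := hcomm u hu
    generalize Υ₀ + Δ u = Υ at hcomm hcomm' ⊢
    simp only [smul_add, mul_add, add_mul, mul_smul_comm, smul_mul_assoc, smul_smul, mul_assoc]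
    -- `D D* Υ = D Υᵀ D* = Υ D D*`, after which all terms cancel
    rw [hcomm', ← mul_assoc (D u), ← hcomm, mul_assoc]
    module
  have h := eq_of_hasDerivWithinAt_Ici_zero hderiv ht
  simpa only [sq, hflow.1, hflow.2.1, add_zero] using h

end IsEllipticFlow

/-- Constant of motion in the commutative case `Υ₀D₀ = D₀Υ₀ᵀ`: along the elliptic flow,
`Υ_t D_t = D_t Υ_tᵀ` and `Υ_t² + 4D_tD_t* = Υ_s² + 4D_sD_s*` for all `s, t ≥ 0`. -/
theorem constant_of_motion_commutative
    (Υ₀ D₀ : H →L[ℂ] H) (hΥ₀ : IsSelfAdjoint Υ₀)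
    (C : Conjugation H) (transp : (H →L[ℂ] H) → (H →L[ℂ] H))
    (htransp : IsTranspose C transp)
    (hD₀sym : transp D₀ = D₀ ∨ transp D₀ = -D₀)
    (hcomm : Υ₀ * D₀ = D₀ * transp Υ₀)
    (Δ D : ℝ → H →L[ℂ] H) (hflow : IsEllipticFlow transp Υ₀ D₀ Δ D) :
    ∀ s t : ℝ, 0 ≤ s → 0 ≤ t →
      (Υ₀ + Δ t) * D t = D t * transp (Υ₀ + Δ t) ∧
      (Υ₀ + Δ t) ^ 2 + (4 : ℂ) • (D t * adjoint (D t))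
        = (Υ₀ + Δ s) ^ 2 + (4 : ℂ) • (D s * adjoint (D s)) := by
  obtain ⟨ε, hε, hD₀ε⟩ : ∃ ε : ℂ, ‖ε‖ = 1 ∧ transp D₀ = ε • D₀ := by
    rcases hD₀sym with h | h
    exacts [⟨1, norm_one, by rw [h, one_smul]⟩, ⟨-1, by simp, by rw [h, neg_one_smul]⟩]
  have hDD : ∀ u, 0 ≤ u → transp (D u * adjoint (D u)) = adjoint (D u) * D u := fun u hu =>
    htransp.map_mul_adjoint_of_eq_smul hε (hflow.transp_eq_smul htransp hD₀ε hu)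
  have hcomm_t : ∀ u, 0 ≤ u → (Υ₀ + Δ u) * D u = D u * transp (Υ₀ + Δ u) := fun u hu =>
    hflow.upsilon_mul_eq_mul_transp htransp hcomm hDD hu
  have hsa : ∀ u, 0 ≤ u → IsSelfAdjoint (Υ₀ + Δ u) := fun u hu =>
    hflow.isSelfAdjoint_upsilon hΥ₀ hu
  intro s t hs ht
  exact ⟨hcomm_t t ht, by rw [hflow.upsilon_sq_add_eq htransp hsa hcomm_t ht,
    hflow.upsilon_sq_add_eq htransp hsa hcomm_t hs]⟩
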